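/- Let m ≤ n, let x : ℝᵐ → ℝⁿ be twice continuously differentiable with Jacobian ∇x(ξ) of rank m for every ξ, and let ρ : ℝⁿ → ℝ be continuously differentiable and strictly positive, such that ρ(x(ξ))·√(det(∇x(ξ)ᵀ∇x(ξ))) = 1 for all ξ. Suppose that at ξ = 0 the columns of Q := ∇x(0) are orthonormal, i.e. QᵀQ = I_m. Then for every i ∈ {1,…,m}, ∂_{ξᵢ}( log ρ(x(ξ)) ) evaluated at ξ = 0 equals −∑_{j=1}^{m} Q^{(:j)} · ∂_{ξᵢ}∂_{ξⱼ}x(0), where Q^{(:j)} denotes the j-th column of Q and · the Euclidean inner product in ℝⁿ. -/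

import Mathlib

/-!
Since `ρ(x ξ) = det(G ξ)^{-1/2}` with `G = ∇xᵀ ∇x` the Gram matrix of the chart, we have
`log ρ(x ξ) = -½ log det G(ξ)`. At `ξ = 0` the Gram matrix is the identity, where Jacobi's formula
reduces to `d(det G) = tr dG`, and `∂ᵢ G_kk = 2 ∑_b Q_bk ∂ᵢ∂ₖx_b`.
-/

open Matrix Finset

theorem Equiv.Perm.prod_erase_one_apply_eq_zero {ι R : Type*} [Fintype ι] [DecidableEq ι]
    [CommMonoidWithZero R] {σ : Equiv.Perm ι} (hσ : σ ≠ 1) (k : ι) :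
    ∏ l ∈ univ.erase k, (1 : Matrix ι ι R) (σ l) l = 0 := by
  obtain ⟨a, ha⟩ : ∃ a, σ a ≠ a := not_forall.mp fun h => hσ (Equiv.ext h)
  -- `σ` moves both `a` and `σ a`, and at most one of them is `k`.
  by_cases hak : a = k
  · have hσa : σ (σ a) ≠ σ a := fun h => ha (σ.injective h)
    exact prod_eq_zero (mem_erase.mpr ⟨hak ▸ ha, mem_univ _⟩) (one_apply_ne hσa)
  · exact prod_eq_zero (mem_erase.mpr ⟨hak, mem_univ _⟩) (one_apply_ne ha)

section Jacobi

variable {𝕜 E ι : Type*} [NontriviallyNormedField 𝕜] [NormedAddCommGroup E] [NormedSpace 𝕜 E]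
  [Fintype ι] [DecidableEq ι]

theorem hasFDerivAt_det_of_eq_one {G : E → Matrix ι ι 𝕜} {G' : ι → ι → E →L[𝕜] 𝕜} {x₀ : E}
    (hG : ∀ a b, HasFDerivAt (fun ξ => G ξ a b) (G' a b) x₀) (hG₀ : G x₀ = 1) :
    HasFDerivAt (fun ξ => (G ξ).det) (∑ k, G' k k) x₀ := by
  have hLeibniz := HasFDerivAt.fun_sum (u := univ) fun σ _ =>
    (HasFDerivAt.finsetProd (u := univ) fun k _ => hG (σ k) k).const_mul
      ((Equiv.Perm.sign σ : ℤ) : 𝕜)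
  simp only [det_apply', hG₀] at hLeibniz ⊢
  -- At the identity every Leibniz term except that of `σ = 1` vanishes to first order.
  refine hLeibniz.congr_fderiv (ContinuousLinearMap.ext fun v => ?_)
  simp only [_root_.sum_apply, _root_.smul_apply, smul_eq_mul]
  rw [sum_eq_single 1 (fun σ _ hσ => by simp [Equiv.Perm.prod_erase_one_apply_eq_zero hσ])
    (fun h => absurd (mem_univ _) h)]
  simp [one_apply]

theorem hasFDerivAt_det_transpose_mul_self_of_eq_one {κ : Type*} [Fintype κ] {A : E → Matrix κ ι 𝕜}
    {A' : κ → ι → E →L[𝕜] 𝕜} {x₀ : E} (hA : ∀ c a, HasFDerivAt (fun ξ => A ξ c a) (A' c a) x₀)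
    (hA₀ : (A x₀)ᵀ * A x₀ = 1) :
    HasFDerivAt (fun ξ => ((A ξ)ᵀ * A ξ).det) (2 • ∑ k, ∑ c, A x₀ c k • A' c k) x₀ := by
  have hGram : ∀ a b, HasFDerivAt (fun ξ => ((A ξ)ᵀ * A ξ) a b)
      (∑ c, (A x₀ c a • A' c b + A x₀ c b • A' c a)) x₀ := fun a b => by
    simp only [mul_apply, transpose_apply]
    exact HasFDerivAt.fun_sum fun c _ => (hA c a).mul (hA c b)
  refine (hasFDerivAt_det_of_eq_one hGram hA₀).congr_fderiv ?_
  simp only [← two_smul ℕ, smul_sum]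

end Jacobi

theorem Real.log_eq_neg_half_log_of_mul_sqrt_eq_one {r d : ℝ} (h : r * √d = 1) :
    Real.log r = -(1 / 2) * Real.log d := by
  have hd : 0 < d :=
    Real.sqrt_pos.mp ((Real.sqrt_nonneg d).lt_of_ne' (right_ne_zero_of_mul_eq_one h))
  rw [eq_inv_of_mul_eq_one_left h, Real.log_inv, Real.log_sqrt hd.le]
  ring

theorem ContDiff.differentiable_fderiv_apply_apply {𝕜 E κ : Type*} [RCLike 𝕜]
    [NormedAddCommGroup E] [NormedSpace 𝕜 E] [Fintype κ] {f : E → EuclideanSpace 𝕜 κ}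
    (hf : ContDiff 𝕜 2 f) (v : E) (c : κ) : Differentiable 𝕜 (fun ξ => fderiv 𝕜 f ξ v c) :=
  ((EuclideanSpace.proj (𝕜 := 𝕜) c).contDiff.comp
    ((hf.fderiv_right (m := 1) (by norm_num)).clm_apply (contDiff_const (c := v)))).differentiable
    one_ne_zero

theorem stmt9_general {m n : ℕ}
    (x : EuclideanSpace ℝ (Fin m) → EuclideanSpace ℝ (Fin n))
    (ρ : EuclideanSpace ℝ (Fin n) → ℝ)
    (hx : ContDiff ℝ 2 x)
    (J : EuclideanSpace ℝ (Fin m) → Matrix (Fin n) (Fin m) ℝ)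
    (hJ : ∀ ξ a j, J ξ a j = fderiv ℝ x ξ (EuclideanSpace.single j 1) a)
    (hdens : ∀ ξ, ρ (x ξ) * Real.sqrt ((((J ξ)ᵀ) * J ξ).det) = 1)
    (horth : ((J 0)ᵀ) * J 0 = 1)
    (i : Fin m) :
    fderiv ℝ (fun η => Real.log (ρ (x η))) 0 (EuclideanSpace.single i 1)
      = - ∑ j : Fin m, ∑ b : Fin n, J 0 b j *
          fderiv ℝ (fun η => fderiv ℝ x η (EuclideanSpace.single j 1) b) 0
            (EuclideanSpace.single i 1) := by
  have hJ_hasFDerivAt : ∀ b j, HasFDerivAt (fun ξ => J ξ b j)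
      (fderiv ℝ (fun η => fderiv ℝ x η (EuclideanSpace.single j 1) b) 0) 0 := fun b j => by
    simp only [hJ]
    exact (hx.differentiable_fderiv_apply_apply _ b 0).hasFDerivAt
  have hlog : (fun η => Real.log (ρ (x η)))
      = fun η => -(1 / 2) * Real.log (((J η)ᵀ * J η).det) :=
    funext fun η => Real.log_eq_neg_half_log_of_mul_sqrt_eq_one (hdens η)
  have hderiv := ((hasFDerivAt_det_transpose_mul_self_of_eq_one hJ_hasFDerivAt horth).log
    (by simp [horth])).const_mul (-(1 / 2))
  rw [hlog, hderiv.fderiv]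
  simp [horth]

/-- Simplified expression for the SRB density gradient at a point where the
chart of the `m`-dimensional unstable manifold is orthonormalized: if the
columns of `Q = ∇x(0)` are orthonormal, then
`∂ᵢ log ρ(x(ξ))|_{ξ=0} = −∑ⱼ Q⁽:ʲ⁾ · ∂ᵢ∂ⱼx(0)`. -/
theorem stmt9 {m n : ℕ} (hmn : m ≤ n)
    (x : EuclideanSpace ℝ (Fin m) → EuclideanSpace ℝ (Fin n))
    (ρ : EuclideanSpace ℝ (Fin n) → ℝ)
    (hx : ContDiff ℝ 2 x) (hρ : ContDiff ℝ 1 ρ) (hρpos : ∀ p, 0 < ρ p)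
    (J : EuclideanSpace ℝ (Fin m) → Matrix (Fin n) (Fin m) ℝ)
    (hJ : ∀ ξ a j, J ξ a j = fderiv ℝ x ξ (EuclideanSpace.single j 1) a)
    (hrank : ∀ ξ, (J ξ).rank = m)
    (hdens : ∀ ξ, ρ (x ξ) * Real.sqrt ((((J ξ)ᵀ) * J ξ).det) = 1)
    (horth : ((J 0)ᵀ) * J 0 = 1)
    (i : Fin m) :
    fderiv ℝ (fun η => Real.log (ρ (x η))) 0 (EuclideanSpace.single i 1)
      = - ∑ j : Fin m, ∑ b : Fin n, J 0 b j *
          fderiv ℝ (fun η => fderiv ℝ x η (EuclideanSpace.single j 1) b) 0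
            (EuclideanSpace.single i 1) :=
  stmt9_general x ρ hx J hJ hdens horth i
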